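/- Suppose E is finite dimensional, A(X,E) contains the constant functions, and there exists a complete norm ‖·‖ on A(X,E) with ‖·‖ ≥ ‖·‖_∞ such that (A(X,E), ‖·‖) has property (P) and ‖g·f‖ ≤ ‖g‖_{A(X)} ‖f‖ for all g ∈ A(X) and f ∈ A(X,E). Then φ(Y_d) is a finite set and every point of φ(Y_d) is a limit (non-isolated) point of X, where φ is the support map and Y_d = Y₁ ∖ (Y_cT ∩ Y_cS). -/

import Mathlib

/-!
Since `A(X)` is regular and `T, S` are jointly separating, `Tf(y)` and `Sf(y)` vanish as soon as
`f` vanishes near `φ(y)`. If `f ↦ Tf(y)` is bounded for the complete norm, property (P) upgrades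
this to: `Tf(y) = 0` whenever `f(φ(y)) = 0`; if `φ(y)` is isolated this holds outright. In both
cases `Tf(y) = L(f(φ(y)))` for the linear functional `L e = T(const e)(y)` on the finite
dimensional space `E`, so `f ↦ Tf(y)` is sup-norm continuous. Hence the support points of `Y_d`
are not isolated, and at each point of `Y_d` one of the two evaluations is unbounded.

Finiteness is a gliding hump argument. Infinitely many such support points `xₙ = φ(yₙ)` could be
separated by pairwise disjoint open sets `Uₙ`; localising with bump functions of `A(X)` gives
`fₙ` with cozero set in `Uₙ`, `‖fₙ‖ ≤ 2⁻ⁿ` and `|Rfₙ(yₙ)| > n`. By completeness `F = Σ fₙ` lies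
in `A(X,E)` and agrees with `fₙ` on `Uₙ`, so `|RF(yₙ)| > n` for every `n`, which is impossible
for the continuous function `RF` on the compact space `Y`.
-/

open Set Filter Topology

/-- `B` together with the norm `nB` is a regular Banach function algebra on the
compact Hausdorff space `X`: it separates points (it contains the constants since it
is a subalgebra), `nB` is a complete algebra norm on `B` dominating the sup norm, and
the regularity (partition of unity) property holds. -/
structure IsRegularBanachFunctionAlgebra {X : Type*} [TopologicalSpace X] [CompactSpace X]
    [T2Space X] (B : Subalgebra ℂ C(X, ℂ)) (nB : C(X, ℂ) → ℝ) : Prop where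
  separates : ∀ x y : X, x ≠ y → ∃ f ∈ B, f x ≠ f y
  norm_nonneg : ∀ f ∈ B, 0 ≤ nB f
  norm_add_le : ∀ f ∈ B, ∀ g ∈ B, nB (f + g) ≤ nB f + nB g
  norm_smul : ∀ (c : ℂ), ∀ f ∈ B, nB (c • f) = ‖c‖ * nB f
  norm_eq_zero_iff : ∀ f ∈ B, (nB f = 0 ↔ f = 0)
  norm_mul_le : ∀ f ∈ B, ∀ g ∈ B, nB (f * g) ≤ nB f * nB g
  sup_norm_le : ∀ f ∈ B, ‖f‖ ≤ nB f
  complete : ∀ u : ℕ → C(X, ℂ), (∀ n, u n ∈ B) →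
    (∀ ε : ℝ, 0 < ε → ∃ N : ℕ, ∀ m ≥ N, ∀ n ≥ N, nB (u m - u n) < ε) →
    ∃ l ∈ B, ∀ ε : ℝ, 0 < ε → ∃ N : ℕ, ∀ n ≥ N, nB (u n - l) < ε
  regular : ∀ K : Set X, IsCompact K → ∀ (n : ℕ) (U : Fin n → Set X),
    (∀ i, IsOpen (U i)) → K ⊆ ⋃ i, U i →
    ∃ g : Fin n → C(X, ℂ), (∀ i, g i ∈ B) ∧ (∀ i, closure {x | g i x ≠ 0} ⊆ U i) ∧
      ∀ x ∈ K, (∑ i, g i x) = 1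

variable {X Y E : Type*} [TopologicalSpace X] [CompactSpace X] [T2Space X]
  [TopologicalSpace Y] [CompactSpace Y] [T2Space Y]
  [NormedAddCommGroup E] [NormedSpace ℂ E] [CompleteSpace E]
  (A : Submodule ℂ C(X, E))

/-- The cozero set of a function in the subspace `A = A(X,E)` of `C(X,E)`. -/
def coz (f : ↥A) : Set X := {x | (f : C(X, E)) x ≠ 0}

/-- `T, S : A(X,E) → C(Y)` are jointly separating: `Tf · Sg = 0` on `Y` whenever `f`
and `g` have disjoint cozero sets. -/
def JointlySeparating (T S : ↥A →ₗ[ℂ] C(Y, ℂ)) : Prop :=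
  ∀ f g : ↥A, coz A f ∩ coz A g = ∅ → ∀ y : Y, T f y * S g y = 0

/-- The set `Y₁ = (⋃_f coz(Tf)) ∩ (⋃_f coz(Sf))`. -/
def Y1 (T S : ↥A →ₗ[ℂ] C(Y, ℂ)) : Set Y :=
  {y | (∃ f : ↥A, T f y ≠ 0) ∧ (∃ f : ↥A, S f y ≠ 0)}

/-- `x` is a support point of `y ∈ Y₁`: every neighborhood `V` of `x` admits
`f ∈ A(X,E)` with `coz(f) ⊆ V` and `Tf(y) ≠ 0` or `Sf(y) ≠ 0`. -/
def IsSupportPoint (T S : ↥A →ₗ[ℂ] C(Y, ℂ)) (y : Y) (x : X) : Prop :=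
  ∀ V ∈ 𝓝 x, ∃ f : ↥A, coz A f ⊆ V ∧ (T f y ≠ 0 ∨ S f y ≠ 0)

/-- `(A(X,E), nn)` has property (P): for every `f ∈ A(X,E)` and `x ∈ X` with `f(x) = 0`
there is a sequence `(fₙ)` in `A(X,E)`, each term vanishing on a neighborhood of `x`,
with `nn (fₙ - f) → 0`. -/
def HasPropertyP (A : Submodule ℂ C(X, E)) (nn : C(X, E) → ℝ) : Prop :=
  ∀ f : ↥A, ∀ x : X, (f : C(X, E)) x = 0 →
    ∃ u : ℕ → C(X, E), (∀ n, u n ∈ A) ∧ (∀ n, ∀ᶠ z in 𝓝 x, u n z = 0) ∧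
      Filter.Tendsto (fun n => nn (u n - (f : C(X, E)))) Filter.atTop (𝓝 0)

/-- `nn` is a complete norm on the subspace `A = A(X,E)` of `C(X,E)` dominating the
sup norm. -/
structure IsCompleteNormOn {X E : Type*} [TopologicalSpace X] [CompactSpace X] [T2Space X]
    [NormedAddCommGroup E] [NormedSpace ℂ E]
    (A : Submodule ℂ C(X, E)) (nn : C(X, E) → ℝ) : Prop where
  nonneg : ∀ f ∈ A, 0 ≤ nn f
  add_le : ∀ f ∈ A, ∀ g ∈ A, nn (f + g) ≤ nn f + nn g
  smul : ∀ (c : ℂ), ∀ f ∈ A, nn (c • f) = ‖c‖ * nn f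
  eq_zero_iff : ∀ f ∈ A, (nn f = 0 ↔ f = 0)
  sup_norm_le : ∀ f ∈ A, ‖f‖ ≤ nn f
  complete : ∀ u : ℕ → C(X, E), (∀ n, u n ∈ A) →
    (∀ ε : ℝ, 0 < ε → ∃ N : ℕ, ∀ m ≥ N, ∀ n ≥ N, nn (u m - u n) < ε) →
    ∃ l ∈ A, ∀ ε : ℝ, 0 < ε → ∃ N : ℕ, ∀ n ≥ N, nn (u n - l) < ε

open Function

section Functionals

variable {X Y E : Type*} [TopologicalSpace X] [TopologicalSpace Y] [NormedAddCommGroup E]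
  [NormedSpace ℂ E] {A : Submodule ℂ C(X, E)}

def IsSupportedAt (ℓ : ↥A →ₗ[ℂ] ℂ) (x : X) : Prop :=
  ∀ f : ↥A, (∀ᶠ z in 𝓝 x, (f : C(X, E)) z = 0) → ℓ f = 0

noncomputable def evalAt (R : ↥A →ₗ[ℂ] C(Y, ℂ)) (y : Y) : ↥A →ₗ[ℂ] ℂ :=
  (ContinuousMap.evalCLM ℂ y).toLinearMap ∘ₗ R

@[simp]
lemma evalAt_apply (R : ↥A →ₗ[ℂ] C(Y, ℂ)) (y : Y) (f : ↥A) : evalAt R y f = R f y := rfl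

lemma JointlySeparating.symm {T S : ↥A →ₗ[ℂ] C(Y, ℂ)} (hTS : JointlySeparating A T S) :
    JointlySeparating A S T := fun f g hfg y ↦ by
  rw [mul_comm]
  exact hTS g f (by rwa [inter_comm]) y

lemma IsSupportPoint.symm {T S : ↥A →ₗ[ℂ] C(Y, ℂ)} {y : Y} {x : X}
    (h : IsSupportPoint A T S y x) : IsSupportPoint A S T y x := fun V hV ↦
  (h V hV).imp fun _ hf ↦ ⟨hf.1, hf.2.symm⟩

lemma continuous_of_apply_eq_zero_of_eval_eq_zero [FiniteDimensional ℂ E]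
    (hconst : ∀ e : E, ContinuousMap.const X e ∈ A) {ℓ : ↥A →ₗ[ℂ] ℂ} {x : X}
    (h : ∀ f : ↥A, (f : C(X, E)) x = 0 → ℓ f = 0) : Continuous ℓ := by
  let c : E →ₗ[ℂ] ↥A :=
    { toFun e := ⟨ContinuousMap.const X e, hconst e⟩
      map_add' _ _ := rfl
      map_smul' _ _ := rfl }
  have hℓ : ⇑ℓ = (ℓ ∘ₗ c) ∘ fun f : ↥A ↦ (f : C(X, E)) x := by
    funext f
    have := h (f - c ((f : C(X, E)) x)) (sub_self _)
    rwa [map_sub, sub_eq_zero] at this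
  rw [hℓ]
  exact (ℓ ∘ₗ c).continuous_of_finiteDimensional.comp
    ((continuous_eval_const x).comp continuous_subtype_val)

lemma IsSupportedAt.continuous_of_isOpen_singleton [FiniteDimensional ℂ E]
    (hconst : ∀ e : E, ContinuousMap.const X e ∈ A) {ℓ : ↥A →ₗ[ℂ] ℂ} {x : X}
    (hℓ : IsSupportedAt ℓ x) (hx : IsOpen {x}) : Continuous ℓ :=
  continuous_of_apply_eq_zero_of_eval_eq_zero hconst fun f hf ↦
    hℓ f (mem_of_superset (hx.mem_nhds rfl) fun z hz ↦ by rwa [mem_singleton_iff.1 hz])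

end Functionals

section Compact

variable {X Y E : Type*} [TopologicalSpace X] [CompactSpace X] [T2Space X] [TopologicalSpace Y]
  [NormedAddCommGroup E] [NormedSpace ℂ E] {A : Submodule ℂ C(X, E)}

theorem Set.Infinite.exists_seq_mem_isOpen_pairwiseDisjoint {s : Set X} (hs : s.Infinite) :
    ∃ (x : ℕ → X) (U : ℕ → Set X), (∀ n, x n ∈ s) ∧ (∀ n, IsOpen (U n)) ∧ (∀ n, x n ∈ U n) ∧
      Pairwise (Disjoint on U) := by
  obtain ⟨a, ha⟩ := hs.exists_accPt_principal
  have : Std.Symm (α := Set X) Disjoint := ⟨fun _ _ h ↦ h.symm⟩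
  -- Keeping every `U n` away from the accumulation point `a` leaves room for the next one.
  obtain ⟨U, hU, hd⟩ := exists_seq_of_forall_finset_exists'
    (fun U : Set X ↦ (U ∩ s).Nonempty ∧ IsOpen U ∧ Uᶜ ∈ 𝓝 a) Disjoint fun F hF ↦ by
      have hF' : (⋂ U ∈ F, interior Uᶜ) \ {a} ∈ 𝓝[≠] a := inter_mem_inf
        ((biInter_finset_mem _).2 fun U hU ↦ interior_mem_nhds.2 (hF U hU).2.2)
        (mem_principal_self _)
      obtain ⟨y, ⟨hyF, hya : y ≠ a⟩, hys⟩ :=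
        ha.nonempty_of_mem (inter_mem_inf hF' (mem_principal_self s))
      obtain ⟨V, W, hVo, hWo, hyV, haW, hVW⟩ := t2_separation hya
      refine ⟨V ∩ ⋂ U ∈ F, interior Uᶜ, ⟨⟨y, ⟨hyV, hyF⟩, hys⟩,
        hVo.inter (isOpen_biInter_finset fun _ _ ↦ isOpen_interior), ?_⟩, fun U hU ↦ ?_⟩
      · exact mem_of_superset (hWo.mem_nhds haW) fun z hzW hzV ↦ disjoint_left.1 hVW hzV.1 hzW
      · exact disjoint_left.2 fun z hzU hz ↦ interior_subset (mem_iInter₂.1 hz.2 U hU) hzU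
  choose x hx using fun n ↦ (hU n).1
  exact ⟨x, U, fun n ↦ (hx n).2, fun n ↦ (hU n).2.1, fun n ↦ (hx n).1, hd⟩

variable {B : Subalgebra ℂ C(X, ℂ)} {nB : C(X, ℂ) → ℝ}

lemma IsRegularBanachFunctionAlgebra.exists_eventually_eq_one
    (hB : IsRegularBanachFunctionAlgebra B nB) {U : Set X} (hU : IsOpen U) {x : X} (hx : x ∈ U) :
    ∃ g ∈ B, (∀ᶠ z in 𝓝 x, g z = 1) ∧ ∀ z, g z ≠ 0 → z ∈ U := by
  obtain ⟨K, hKx, hKc, hKU⟩ := exists_mem_nhds_isClosed_subset (hU.mem_nhds hx)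
  obtain ⟨g, hgB, hgU, hg1⟩ :=
    hB.regular K hKc.isCompact 1 (fun _ ↦ U) (fun _ ↦ hU) (by rwa [iUnion_const])
  exact ⟨g 0, hgB 0, mem_of_superset hKx fun z hz ↦ by simpa using hg1 z hz,
    fun z hz ↦ hgU 0 (subset_closure hz)⟩

lemma IsSupportPoint.exists_coz_subset_apply_ne_zero (hB : IsRegularBanachFunctionAlgebra B nB)
    (hmod : ∀ g ∈ B, ∀ f : ↥A, g • (f : C(X, E)) ∈ A)
    {T S : ↥A →ₗ[ℂ] C(Y, ℂ)} (hTS : JointlySeparating A T S) {y : Y} (hy : y ∈ Y1 A T S)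
    {x : X} (hsp : IsSupportPoint A T S y x) {U : Set X} (hU : IsOpen U) (hx : x ∈ U) :
    ∃ h : ↥A, coz A h ⊆ U ∧ S h y ≠ 0 := by
  by_contra! hU0
  obtain ⟨f, hf⟩ := hy.2
  obtain ⟨g, hgB, hg1, hgU⟩ := hB.exists_eventually_eq_one hU hx
  obtain ⟨k, hkg, hk⟩ := hsp _ hg1
  have hkU : coz A k ⊆ U := fun z hz ↦ hgU z (by rw [hkg hz]; exact one_ne_zero)
  have hTk : T k y ≠ 0 := hk.resolve_right (not_not_intro (hU0 k hkU))
  -- Split `f = g f + (f - g f)`: `S` kills the first term (cozero set in `U`), and the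
  -- second term vanishes where `g = 1`, hence off `coz k`, while `T k y ≠ 0`.
  let p : ↥A := ⟨g • (f : C(X, E)), hmod g hgB f⟩
  have hp : S p y = 0 := hU0 p fun z hz ↦ hgU z fun hgz ↦ hz (by simp [p, hgz])
  have hfp : S (f - p) y = 0 := by
    refine (mul_eq_zero.1 (hTS k (f - p) (eq_empty_of_forall_notMem ?_) y)).resolve_left hTk
    rintro z ⟨hzk, hzfp⟩
    exact hzfp (by simp [p, show g z = 1 from hkg hzk])
  exact hf (by rwa [map_sub, ContinuousMap.sub_apply, hp, sub_zero] at hfp)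

lemma IsSupportPoint.isSupportedAt_left (hB : IsRegularBanachFunctionAlgebra B nB)
    (hmod : ∀ g ∈ B, ∀ f : ↥A, g • (f : C(X, E)) ∈ A)
    {T S : ↥A →ₗ[ℂ] C(Y, ℂ)} (hTS : JointlySeparating A T S) {y : Y} (hy : y ∈ Y1 A T S)
    {x : X} (hsp : IsSupportPoint A T S y x) : IsSupportedAt (evalAt T y) x := by
  intro f hf
  obtain ⟨U, hfU, hUo, hxU⟩ := eventually_nhds_iff.1 hf
  obtain ⟨h, hhU, hSh⟩ := hsp.exists_coz_subset_apply_ne_zero hB hmod hTS hy hUo hxU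
  refine (mul_eq_zero.1 (hTS f h (eq_empty_of_forall_notMem ?_) y)).resolve_right hSh
  exact fun z hz ↦ hz.1 (hfU z (hhU hz.2))

lemma IsSupportPoint.isSupportedAt_right (hB : IsRegularBanachFunctionAlgebra B nB)
    (hmod : ∀ g ∈ B, ∀ f : ↥A, g • (f : C(X, E)) ∈ A)
    {T S : ↥A →ₗ[ℂ] C(Y, ℂ)} (hTS : JointlySeparating A T S) {y : Y} (hy : y ∈ Y1 A T S)
    {x : X} (hsp : IsSupportPoint A T S y x) : IsSupportedAt (evalAt S y) x :=
  hsp.symm.isSupportedAt_left hB hmod hTS.symm ⟨hy.2, hy.1⟩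

namespace IsCompleteNormOn

variable {nn : C(X, E) → ℝ}

lemma map_sub_rev (hnn : IsCompleteNormOn A nn) {f g : C(X, E)} (hf : f ∈ A) (hg : g ∈ A) :
    nn (f - g) = nn (g - f) := by
  rw [← neg_sub, ← neg_one_smul ℂ, hnn.smul _ _ (sub_mem hg hf), norm_neg, norm_one, one_mul]

lemma map_sum_le (hnn : IsCompleteNormOn A nn) {ι : Type*} (s : Finset ι) {f : ι → C(X, E)}
    (hf : ∀ i ∈ s, f i ∈ A) : nn (∑ i ∈ s, f i) ≤ ∑ i ∈ s, nn (f i) :=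
  Finset.le_sum_of_subadditive_on_pred nn (· ∈ A) ((hnn.eq_zero_iff 0 (zero_mem A)).2 rfl).le
    (fun f g hf hg ↦ hnn.add_le f hf g hg) (fun _ _ ↦ add_mem) f hf

lemma exists_hasSum (hnn : IsCompleteNormOn A nn) {f : ℕ → C(X, E)} (hfA : ∀ i, f i ∈ A)
    {b : ℕ → ℝ} (hb : Summable b) (hfb : ∀ i, nn (f i) ≤ b i) :
    ∃ F ∈ A, ∀ z, HasSum (fun i ↦ f i z) (F z) := by
  set u : ℕ → C(X, E) := fun n ↦ ∑ i ∈ Finset.range n, f i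
  have huA n : u n ∈ A := sum_mem fun i _ ↦ hfA i
  set s : ℕ → ℝ := fun n ↦ ∑ i ∈ Finset.range n, b i
  have hus {m n : ℕ} (hnm : n ≤ m) : nn (u m - u n) ≤ dist (s m) (s n) := calc
    nn (u m - u n) = nn (∑ i ∈ Finset.Ico n m, f i) := by rw [Finset.sum_Ico_eq_sub _ hnm]
    _ ≤ ∑ i ∈ Finset.Ico n m, b i :=
      (hnn.map_sum_le _ fun i _ ↦ hfA i).trans (Finset.sum_le_sum fun i _ ↦ hfb i)
    _ = s m - s n := Finset.sum_Ico_eq_sub _ hnm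
    _ ≤ dist (s m) (s n) := le_abs_self _
  obtain ⟨F, hFA, hF⟩ := hnn.complete u huA fun ε hε ↦ by
    obtain ⟨N, hN⟩ := Metric.cauchySeq_iff.1 hb.hasSum.tendsto_sum_nat.cauchySeq ε hε
    refine ⟨N, fun m hm n hn ↦ ?_⟩
    rcases le_total n m with h | h
    · exact (hus h).trans_lt (hN m hm n hn)
    · rw [hnn.map_sub_rev (huA m) (huA n)]
      exact (hus h).trans_lt (hN n hn m hm)
  have hsup {g : C(X, E)} (hg : g ∈ A) (z : X) : ‖g z‖ ≤ nn g :=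
    (g.norm_coe_le_norm z).trans (hnn.sup_norm_le g hg)
  refine ⟨F, hFA, fun z ↦ ?_⟩
  have hsum : Summable fun i ↦ ‖f i z‖ :=
    hb.of_nonneg_of_le (fun _ ↦ norm_nonneg _) fun i ↦ (hsup (hfA i) z).trans (hfb i)
  rw [hasSum_iff_tendsto_nat_of_summable_norm hsum, Metric.tendsto_atTop]
  intro ε hε
  obtain ⟨N, hN⟩ := hF ε hε
  refine ⟨N, fun n hn ↦ ?_⟩
  rw [dist_eq_norm, ← ContinuousMap.sum_apply, ← ContinuousMap.sub_apply]
  exact (hsup (sub_mem (huA n) hFA) z).trans_lt (hN n hn)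

lemma exists_le_lt_norm_of_not_bounded (hnn : IsCompleteNormOn A nn) {ℓ : ↥A →ₗ[ℂ] ℂ}
    (hℓ : ¬∃ C, ∀ f : ↥A, ‖ℓ f‖ ≤ C * nn f) {ε : ℝ} (hε : 0 < ε) (M : ℝ) :
    ∃ f : ↥A, nn f ≤ ε ∧ M < ‖ℓ f‖ := by
  push Not at hℓ
  obtain ⟨f, hf⟩ := hℓ (|M| / ε)
  have hnf : 0 < nn f := by
    refine (hnn.nonneg f f.2).lt_of_ne' fun h0 ↦ ?_
    rw [h0, mul_zero, show f = 0 from Subtype.ext ((hnn.eq_zero_iff f f.2).1 h0), map_zero,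
      norm_zero] at hf
    exact hf.false
  obtain ⟨c, hc, hcf⟩ : ∃ c : ℝ, 0 < c ∧ c * nn f = ε :=
    ⟨ε / nn f, by positivity, div_mul_cancel₀ ε hnf.ne'⟩
  refine ⟨(c : ℂ) • f, ?_, ?_⟩
  · rw [Submodule.coe_smul, hnn.smul _ _ f.2, Complex.norm_real, Real.norm_of_nonneg hc.le]
    exact hcf.le
  · calc M ≤ |M| := le_abs_self M
      _ = c * (|M| / ε * nn f) := by rw [mul_left_comm, hcf, div_mul_cancel₀ _ hε.ne']
      _ < c * ‖ℓ f‖ := mul_lt_mul_of_pos_left hf hc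
      _ = ‖ℓ ((c : ℂ) • f)‖ := by
        rw [map_smul, norm_smul, Complex.norm_real, Real.norm_of_nonneg hc.le]

end IsCompleteNormOn

namespace IsSupportedAt

variable {nn : C(X, E) → ℝ} {ℓ : ↥A →ₗ[ℂ] ℂ} {x : X}

lemma eq_zero_of_eval_eq_zero (hnn : IsCompleteNormOn A nn) (hP : HasPropertyP A nn)
    (hℓ : IsSupportedAt ℓ x) (hbdd : ∃ C, ∀ f : ↥A, ‖ℓ f‖ ≤ C * nn f) {f : ↥A}
    (hfx : (f : C(X, E)) x = 0) : ℓ f = 0 := by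
  obtain ⟨C, hC⟩ := hbdd
  obtain ⟨u, huA, hu0, hu⟩ := hP f x hfx
  have hle n : ‖ℓ f‖ ≤ C * nn (u n - f) := calc
    ‖ℓ f‖ = ‖ℓ (f - ⟨u n, huA n⟩)‖ := by rw [map_sub, hℓ ⟨u n, huA n⟩ (hu0 n), sub_zero]
    _ ≤ C * nn (f - u n) := hC _
    _ = C * nn (u n - f) := by rw [hnn.map_sub_rev f.2 (huA n)]
  have hlim : Tendsto (fun n ↦ C * nn (u n - f)) atTop (𝓝 0) := by
    simpa using hu.const_mul C
  exact norm_le_zero_iff.1 (ge_of_tendsto hlim (.of_forall hle))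

lemma continuous_of_bounded [FiniteDimensional ℂ E]
    (hconst : ∀ e : E, ContinuousMap.const X e ∈ A) (hnn : IsCompleteNormOn A nn)
    (hP : HasPropertyP A nn) (hℓ : IsSupportedAt ℓ x) (hbdd : ∃ C, ∀ f : ↥A, ‖ℓ f‖ ≤ C * nn f) :
    Continuous ℓ :=
  continuous_of_apply_eq_zero_of_eval_eq_zero hconst fun _ ↦ hℓ.eq_zero_of_eval_eq_zero hnn hP hbdd

lemma exists_coz_subset_le_lt_norm_of_not_bounded (hB : IsRegularBanachFunctionAlgebra B nB)
    (hmod : ∀ g ∈ B, ∀ f : ↥A, g • (f : C(X, E)) ∈ A) (hnn : IsCompleteNormOn A nn)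
    (hsubmul : ∀ g ∈ B, ∀ f : ↥A, nn (g • (f : C(X, E))) ≤ nB g * nn (f : C(X, E)))
    (hℓ : IsSupportedAt ℓ x) (hunb : ¬∃ C, ∀ f : ↥A, ‖ℓ f‖ ≤ C * nn f) {U : Set X}
    (hU : IsOpen U) (hx : x ∈ U) {ε : ℝ} (hε : 0 < ε) (M : ℝ) :
    ∃ f : ↥A, coz A f ⊆ U ∧ nn f ≤ ε ∧ M < ‖ℓ f‖ := by
  obtain ⟨g, hgB, hg1, hgU⟩ := hB.exists_eventually_eq_one hU hx
  have hg : 0 ≤ nB g := hB.norm_nonneg g hgB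
  obtain ⟨f, hfε, hfM⟩ :=
    hnn.exists_le_lt_norm_of_not_bounded hunb (ε := ε / (nB g + 1)) (by positivity) M
  let p : ↥A := ⟨g • (f : C(X, E)), hmod g hgB f⟩
  have hp : ℓ p = ℓ f := by
    have := hℓ (f - p) (hg1.mono fun z hz ↦ by simp [p, hz])
    rwa [map_sub, sub_eq_zero, eq_comm] at this
  refine ⟨p, fun z hz ↦ hgU z fun hgz ↦ hz (by simp [p, hgz]), ?_, hp ▸ hfM⟩
  calc nn p ≤ nB g * nn f := hsubmul g hgB f
    _ ≤ nB g * (ε / (nB g + 1)) := by gcongr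
    _ ≤ ε := by
      rw [mul_div_assoc', div_le_iff₀ (by positivity)]
      nlinarith

end IsSupportedAt

theorem finite_image_of_not_bounded [CompactSpace Y] (hB : IsRegularBanachFunctionAlgebra B nB)
    (hmod : ∀ g ∈ B, ∀ f : ↥A, g • (f : C(X, E)) ∈ A) {nn : C(X, E) → ℝ}
    (hnn : IsCompleteNormOn A nn)
    (hsubmul : ∀ g ∈ B, ∀ f : ↥A, nn (g • (f : C(X, E))) ≤ nB g * nn (f : C(X, E)))
    (R : ↥A →ₗ[ℂ] C(Y, ℂ)) (φ : Y → X) {D : Set Y}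
    (hloc : ∀ y ∈ D, IsSupportedAt (evalAt R y) (φ y))
    (hunb : ∀ y ∈ D, ¬∃ C, ∀ f : ↥A, ‖R f y‖ ≤ C * nn f) :
    (φ '' D).Finite := by
  by_contra hinf
  obtain ⟨x, U, hxD, hUo, hxU, hU⟩ := Set.Infinite.exists_seq_mem_isOpen_pairwiseDisjoint hinf
  choose y hyD hyx using hxD
  have hf n : ∃ f : ↥A, coz A f ⊆ U n ∧ nn f ≤ (1 / 2) ^ n ∧ n < ‖R f (y n)‖ :=
    (hloc _ (hyD n)).exists_coz_subset_le_lt_norm_of_not_bounded hB hmod hnn hsubmul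
      (hunb _ (hyD n)) (hUo n) (hyx n ▸ hxU n) (by positivity) n
  choose f hfU hfnn hfR using hf
  obtain ⟨F, hFA, hF⟩ := hnn.exists_hasSum (fun i ↦ (f i).2) summable_geometric_two hfnn
  have hFf n : R ⟨F, hFA⟩ (y n) = R (f n) (y n) := by
    have hvan : ∀ᶠ z in 𝓝 (φ (y n)), ((⟨F, hFA⟩ - f n : ↥A) : C(X, E)) z = 0 := by
      refine mem_of_superset ((hUo n).mem_nhds (hyx n ▸ hxU n)) fun z hz ↦ sub_eq_zero.2 ?_
      refine (hF z).unique (hasSum_single n fun i hi ↦ ?_)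
      by_contra hfi
      exact disjoint_left.1 (hU hi) (hfU i hfi) hz
    simpa [sub_eq_zero] using hloc _ (hyD n) _ hvan
  obtain ⟨n, hn⟩ := exists_nat_gt ‖R ⟨F, hFA⟩‖
  exact (hn.trans ((hfR n).trans_le ((hFf n).symm ▸ (R _).norm_coe_le_norm (y n)))).false

end Compact

/-- **Theorem 3.13 (i).** Suppose `E` is finite dimensional, `A(X,E)` contains the
constants and carries a complete norm `nn ≥ ‖·‖_∞` with property (P) and
`nn(g·f) ≤ ‖g‖_{A(X)} nn(f)`.  Then `φ(Y_d)` is finite and consists of limit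
(non-isolated) points of `X`, where `Y_d = Y₁ \ (Y_cT ∩ Y_cS)`. -/
theorem image_Yd_finite
    [FiniteDimensional ℂ E]
    (B : Subalgebra ℂ C(X, ℂ)) (nB : C(X, ℂ) → ℝ)
    (hB : IsRegularBanachFunctionAlgebra B nB)
    (hmod : ∀ g ∈ B, ∀ f : ↥A, g • (f : C(X, E)) ∈ A)
    (hconst : ∀ e : E, ContinuousMap.const X e ∈ A)
    (nn : C(X, E) → ℝ) (hnn : IsCompleteNormOn A nn)
    (hP : HasPropertyP A nn)
    (hsubmul : ∀ g ∈ B, ∀ f : ↥A, nn (g • (f : C(X, E))) ≤ nB g * nn (f : C(X, E)))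
    (T S : ↥A →ₗ[ℂ] C(Y, ℂ)) (hTS : JointlySeparating A T S)
    (φ : Y → X) (hφ : ∀ y ∈ Y1 A T S, IsSupportPoint A T S y (φ y)) :
    ∀ Yd : Set Y,
      Yd = Y1 A T S \ ({y ∈ Y1 A T S | Continuous fun f : ↥A => T f y} ∩
          {y ∈ Y1 A T S | Continuous fun f : ↥A => S f y}) →
      (φ '' Yd).Finite ∧ ∀ x ∈ φ '' Yd, (𝓝[≠] x).NeBot := by
  intro Yd hYd
  have hT y (hy : y ∈ Y1 A T S) := (hφ y hy).isSupportedAt_left hB hmod hTS hy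
  have hS y (hy : y ∈ Y1 A T S) := (hφ y hy).isSupportedAt_right hB hmod hTS hy
  let D (R : ↥A →ₗ[ℂ] C(Y, ℂ)) := {y ∈ Y1 A T S | ¬∃ C, ∀ f : ↥A, ‖R f y‖ ≤ C * nn f}
  have hfin R (hloc : ∀ y ∈ Y1 A T S, IsSupportedAt (evalAt R y) (φ y)) : (φ '' D R).Finite :=
    finite_image_of_not_bounded hB hmod hnn hsubmul R φ (fun y hy ↦ hloc y hy.1) fun y hy ↦ hy.2
  have hYD : Yd ⊆ D T ∪ D S := by
    rw [hYd]
    rintro y ⟨hy, hyc⟩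
    by_contra h
    obtain ⟨hyT, hyS⟩ := not_or.1 h
    exact hyc ⟨⟨hy, (hT y hy).continuous_of_bounded hconst hnn hP
        (not_not.1 fun h' ↦ hyT ⟨hy, h'⟩)⟩,
      ⟨hy, (hS y hy).continuous_of_bounded hconst hnn hP (not_not.1 fun h' ↦ hyS ⟨hy, h'⟩)⟩⟩
  refine ⟨((hfin T hT).union (hfin S hS)).subset (image_union φ _ _ ▸ image_mono hYD), ?_⟩
  rw [hYd]
  rintro _ ⟨y, ⟨hy, hyc⟩, rfl⟩
  by_contra h
  have hopen : IsOpen {φ y} := (isOpen_singleton_iff_punctured_nhds _).2 (not_neBot.1 h)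
  exact hyc ⟨⟨hy, (hT y hy).continuous_of_isOpen_singleton hconst hopen⟩,
    ⟨hy, (hS y hy).continuous_of_isOpen_singleton hconst hopen⟩⟩
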